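/- arXiv:1207.4529 — 12 statements merged into one kernel-verified Lean document; each statement's English description precedes it below -/
import Mathlib

section
/- Let 0 < a < √2 and define r_a = (√(1−a²) − (1−a²))^{1/2} if 0 < a ≤ 2√2/3, and r_a = √2 − a if 2√2/3 ≤ a < √2. Then the open disk {w ∈ ℂ : |w − a| < r_a} is contained in the region {w ∈ ℂ : |w² − 1| < 1}. -/
/-!
Write `w = x + iy` and `s = |w|²`. Then `|w² - 1|² = (s + 1)² - 4x²`. If `a² + q² = 1` and
`r² = q - q²`, the disk `|w - a| < r` reads `s + 1 < 2ax + q`, and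
`(2ax + q)² = 4x² + 1 - (2qx - a)²`, so `|w² - 1| < 1` on the disk. With `q = √(1 - a²)` this is
the small-`a` case; for `a ≥ 2√2/3` the disk of radius `√2 - a` lies in the one of radius `√2/3`
about `2√2/3` (both are tangent at `√2`), which is the case `q = 1/3`.
-/

open Real

namespace Complex

theorem sq_norm_sq_sub_one (w : ℂ) : ‖w ^ 2 - 1‖ ^ 2 = (‖w‖ ^ 2 + 1) ^ 2 - 4 * w.re ^ 2 := by
  rw [Complex.sq_norm, Complex.sq_norm]
  simp only [normSq_apply, sub_re, sub_im, pow_two, mul_re, mul_im, one_re, one_im]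
  ring

theorem norm_sq_sub_one_lt_one_iff (w : ℂ) :
    ‖w ^ 2 - 1‖ < 1 ↔ (‖w‖ ^ 2 + 1) ^ 2 < 4 * w.re ^ 2 + 1 := by
  rw [← sq_lt_one_iff₀ (norm_nonneg _), sq_norm_sq_sub_one, sub_lt_iff_lt_add']

theorem sq_norm_sub_ofReal (w : ℂ) (a : ℝ) : ‖w - a‖ ^ 2 = ‖w‖ ^ 2 - 2 * a * w.re + a ^ 2 := by
  rw [Complex.sq_norm, Complex.sq_norm]
  simp only [normSq_apply, sub_re, sub_im, ofReal_re, ofReal_im]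
  ring

theorem norm_sq_sub_one_lt_one_of_norm_sub_lt {a q r : ℝ} (hq : a ^ 2 + q ^ 2 = 1)
    (hr : r ^ 2 = q - q ^ 2) {w : ℂ} (hw : ‖w - a‖ < r) : ‖w ^ 2 - 1‖ < 1 := by
  have hdisk : ‖w‖ ^ 2 + 1 < 2 * a * w.re + q := by
    have := pow_lt_pow_left₀ hw (norm_nonneg _) two_ne_zero
    rw [sq_norm_sub_ofReal] at this
    linarith
  rw [norm_sq_sub_one_lt_one_iff]
  calc (‖w‖ ^ 2 + 1) ^ 2 < (2 * a * w.re + q) ^ 2 := by gcongr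
    _ = 4 * w.re ^ 2 + 1 - (2 * q * w.re - a) ^ 2 := by linear_combination (4 * w.re ^ 2 + 1) * hq
    _ ≤ 4 * w.re ^ 2 + 1 := sub_le_self _ (sq_nonneg _)

theorem norm_sq_sub_one_lt_one_of_norm_sub_lt_sqrt {a : ℝ} (ha : a ^ 2 ≤ 1) {w : ℂ}
    (hw : ‖w - a‖ < √(√(1 - a ^ 2) - (1 - a ^ 2))) : ‖w ^ 2 - 1‖ < 1 := by
  have hq : √(1 - a ^ 2) ^ 2 = 1 - a ^ 2 := sq_sqrt (by linarith)
  refine norm_sq_sub_one_lt_one_of_norm_sub_lt (q := √(1 - a ^ 2)) (by linarith) ?_ hw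
  rw [sq_sqrt, hq]
  exact sub_nonneg.2 (le_sqrt_self_iff.2 (sub_le_self _ (sq_nonneg a)))

end Complex

theorem lemniscate_disk_inclusion (a : ℝ) (ha0 : 0 < a) (ha2 : a < Real.sqrt 2)
    (ra : ℝ)
    (hra : (0 < a ∧ a ≤ 2 * Real.sqrt 2 / 3 →
        ra = Real.sqrt (Real.sqrt (1 - a ^ 2) - (1 - a ^ 2))) ∧
      (2 * Real.sqrt 2 / 3 ≤ a ∧ a < Real.sqrt 2 → ra = Real.sqrt 2 - a)) :
    {w : ℂ | ‖w - (a : ℂ)‖ < ra} ⊆ {w : ℂ | ‖w ^ 2 - 1‖ < 1} := by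
  intro w hw
  have hsqrt2 : √2 ^ 2 = 2 := sq_sqrt zero_le_two
  rcases le_total a (2 * √2 / 3) with hsmall | hlarge
  · rw [Set.mem_ofPred_eq, hra.1 ⟨ha0, hsmall⟩] at hw
    exact Complex.norm_sq_sub_one_lt_one_of_norm_sub_lt_sqrt (by nlinarith) hw
  · rw [Set.mem_ofPred_eq, hra.2 ⟨hlarge, ha2⟩] at hw
    have hw₀ : ‖w - ((2 * √2 / 3 : ℝ) : ℂ)‖ < √2 / 3 := by
      have hdist : ‖(a : ℂ) - ((2 * √2 / 3 : ℝ) : ℂ)‖ = a - 2 * √2 / 3 := by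
        rw [← Complex.ofReal_sub, Complex.norm_real, norm_of_nonneg (sub_nonneg.2 hlarge)]
      linarith [norm_sub_le_norm_sub_add_norm_sub w (a : ℂ) ((2 * √2 / 3 : ℝ) : ℂ)]
    exact Complex.norm_sq_sub_one_lt_one_of_norm_sub_lt (q := 1 / 3)
      (by linear_combination (4 / 9) * hsqrt2) (by linear_combination (1 / 9) * hsqrt2) hw₀
end

section
/- Let a > 1/2 be real and define R_a = a − 1/2 if 1/2 < a ≤ 3/2, and R_a = √(2a − 2) if a ≥ 3/2. Then the open disk {w ∈ ℂ : |w − a| < R_a} is contained in the parabolic region {w ∈ ℂ : |w − 1| < Re w}. -/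
open Real

/-!
Writing `w = x + iy`, the parabolic region is `y² < 2x - 1`. On the disk `(x - a)² + y² < R²`,
`2x - 1 - y² > (x - a + 1)² + 2a - 2 - R²`, which is nonnegative when `R² ≤ 2a - 2`; when instead
`R ≤ 1` and `R ≤ a - 1/2`, the disk forces `x - a + 1 > 1 - R ≥ 0`, so `(x - a + 1)² > (1 - R)²`
and the bound becomes `2a - 1 - 2R ≥ 0`.
-/

lemma sq_norm_sub_ofReal (w : ℂ) (c : ℝ) : ‖w - c‖ ^ 2 = (w.re - c) ^ 2 + w.im ^ 2 := by
  rw [Complex.sq_norm, Complex.normSq_apply]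
  simp [sq]

lemma norm_sub_one_lt_re_iff (w : ℂ) : ‖w - 1‖ < w.re ↔ w.im ^ 2 < 2 * w.re - 1 := by
  have hsq := sq_norm_sub_ofReal w 1
  rw [Complex.ofReal_one] at hsq
  constructor
  · intro h
    nlinarith [pow_lt_pow_left₀ h (norm_nonneg _) two_ne_zero]
  · intro h
    have hre : 0 < w.re := by nlinarith [sq_nonneg w.im]
    exact lt_of_pow_lt_pow_left₀ 2 hre.le (by nlinarith)

lemma disk_subset_parabolicRegion_of_sq_le {a R : ℝ} (hR : R ^ 2 ≤ 2 * a - 2) :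
    {w : ℂ | ‖w - a‖ < R} ⊆ {w : ℂ | ‖w - 1‖ < w.re} := by
  intro w hw
  have hdisk := pow_lt_pow_left₀ hw (norm_nonneg _) two_ne_zero
  rw [sq_norm_sub_ofReal] at hdisk
  exact (norm_sub_one_lt_re_iff w).2 (by nlinarith [sq_nonneg (w.re - a + 1)])

lemma disk_subset_parabolicRegion_of_le {a R : ℝ} (hR₁ : R ≤ 1) (hRa : R ≤ a - 1 / 2) :
    {w : ℂ | ‖w - a‖ < R} ⊆ {w : ℂ | ‖w - 1‖ < w.re} := by
  intro w hw
  have hdisk := pow_lt_pow_left₀ hw (norm_nonneg _) two_ne_zero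
  rw [sq_norm_sub_ofReal] at hdisk
  have hre : 1 - R < w.re - a + 1 := by
    have hre_ge : -‖w - a‖ ≤ w.re - a := by
      simpa using (abs_le.1 (Complex.abs_re_le_norm (w - a))).1
    linarith [show ‖w - a‖ < R from hw]
  exact (norm_sub_one_lt_re_iff w).2
    (by nlinarith [mul_lt_mul'' hre hre (by linarith) (by linarith)])

theorem parabolic_disk_inclusion (a : ℝ) (ha : 1 / 2 < a) (Ra : ℝ)
    (hRa : (1 / 2 < a ∧ a ≤ 3 / 2 → Ra = a - 1 / 2) ∧
      (3 / 2 ≤ a → Ra = Real.sqrt (2 * a - 2))) :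
    {w : ℂ | ‖w - (a : ℂ)‖ < Ra} ⊆ {w : ℂ | ‖w - 1‖ < w.re} := by
  rcases le_or_gt a (3 / 2) with ha' | ha'
  · rw [hRa.1 ⟨ha, ha'⟩]
    exact disk_subset_parabolicRegion_of_le (by linarith) le_rfl
  · rw [hRa.2 ha'.le]
    exact disk_subset_parabolicRegion_of_sq_le (Real.sq_sqrt (by linarith)).le
end

section
/- If p is analytic on the open unit disk with p(0) = 1 and Re p(z) > α for all z in the unit disk, where 0 ≤ α < 1, then for |z| = r < 1 one has |z p'(z)/p(z)| ≤ 2r(1−α)/((1−r)(1 + (1−2α)r)). -/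
/-!
Writing `γ = 1 - 2α`, the map `u ↦ (u - 1) / (u + γ)` sends the half-plane `Re u > α` into the
unit disc, so `w = (p - 1) / (p + γ)` is a Schwarz function with `p = (1 + γ w) / (1 - w)` and
`z p' / p = (1 + γ) z w' / ((1 - w)(1 + γ w))`. The Schwarz lemma gives `|w(z)| ≤ r`, the
Schwarz–Pick lemma gives `|w'(z)| ≤ (1 - |w|²) / (1 - r²)`, and `|1 - w| |1 + γ w|` is at least its
value `(1 - |w|)(1 + γ|w|)` on the positive real axis; the resulting bound increases in `|w|`,
so it is largest at `|w| = r`.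
-/

open Metric Complex ComplexConjugate Set

noncomputable def diskMobius (a w : ℂ) : ℂ := (a - w) / (1 - conj a * w)

lemma norm_one_sub_conj_mul_sq_sub_norm_sub_sq (a w : ℂ) :
    ‖1 - conj a * w‖ ^ 2 - ‖a - w‖ ^ 2 = (1 - ‖a‖ ^ 2) * (1 - ‖w‖ ^ 2) := by
  simp only [← normSq_eq_norm_sq, normSq_apply, sub_re, sub_im, mul_re, mul_im, conj_re,
    conj_im, one_re, one_im]
  ring

lemma norm_sub_lt_norm_one_sub_conj_mul {a w : ℂ} (ha : ‖a‖ < 1) (hw : ‖w‖ < 1) :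
    ‖a - w‖ < ‖1 - conj a * w‖ := by
  have hdiff := norm_one_sub_conj_mul_sq_sub_norm_sub_sq a w
  have hpos : 0 < (1 - ‖a‖ ^ 2) * (1 - ‖w‖ ^ 2) := by
    apply mul_pos <;> nlinarith [norm_nonneg a, norm_nonneg w]
  exact lt_of_pow_lt_pow_left₀ 2 (norm_nonneg _) (by linarith)

lemma one_sub_conj_mul_ne_zero {a w : ℂ} (ha : ‖a‖ < 1) (hw : ‖w‖ < 1) :
    1 - conj a * w ≠ 0 :=
  norm_pos_iff.mp ((norm_nonneg _).trans_lt (norm_sub_lt_norm_one_sub_conj_mul ha hw))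

lemma mapsTo_diskMobius {a : ℂ} (ha : ‖a‖ < 1) :
    MapsTo (diskMobius a) (ball 0 1) (ball 0 1) := by
  intro w hw
  rw [mem_ball_zero_iff] at hw ⊢
  rw [diskMobius, norm_div, div_lt_one (norm_pos_iff.mpr (one_sub_conj_mul_ne_zero ha hw))]
  exact norm_sub_lt_norm_one_sub_conj_mul ha hw

lemma hasDerivAt_diskMobius {a w : ℂ} (h : 1 - conj a * w ≠ 0) :
    HasDerivAt (diskMobius a) ((normSq a - 1) / (1 - conj a * w) ^ 2) w := by
  have hnum : HasDerivAt (fun x : ℂ => a - x) (-1) w := by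
    simpa using (hasDerivAt_id w).const_sub a
  have hden : HasDerivAt (fun x : ℂ => 1 - conj a * x) (-conj a) w := by
    simpa using ((hasDerivAt_id w).const_mul (conj a)).const_sub 1
  refine (hnum.div hden h).congr_deriv ?_
  rw [normSq_eq_conj_mul_self]
  ring

lemma differentiableOn_diskMobius {a : ℂ} (ha : ‖a‖ < 1) :
    DifferentiableOn ℂ (diskMobius a) (ball 0 1) := fun _ hw =>
  (hasDerivAt_diskMobius (one_sub_conj_mul_ne_zero ha (mem_ball_zero_iff.mp hw)))
    |>.differentiableAt.differentiableWithinAt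

@[simp] lemma diskMobius_zero (a : ℂ) : diskMobius a 0 = a := by simp [diskMobius]

@[simp] lemma diskMobius_self (a : ℂ) : diskMobius a a = 0 := by simp [diskMobius]

/-- The **Schwarz–Pick lemma**. -/
theorem norm_deriv_mul_one_sub_sq_le_of_mapsTo_ball {f : ℂ → ℂ} (hd : DifferentiableOn ℂ f (ball 0 1))
    (hf : MapsTo f (ball 0 1) (ball 0 1)) {z : ℂ} (hz : z ∈ ball 0 1) :
    ‖deriv f z‖ * (1 - ‖z‖ ^ 2) ≤ 1 - ‖f z‖ ^ 2 := by
  have hz1 : ‖z‖ < 1 := mem_ball_zero_iff.mp hz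
  have hb1 : ‖f z‖ < 1 := mem_ball_zero_iff.mp (hf hz)
  set g := diskMobius (f z) ∘ f ∘ diskMobius z
  have hg_maps : MapsTo g (ball 0 1) (ball 0 1) :=
    (mapsTo_diskMobius hb1).comp (hf.comp (mapsTo_diskMobius hz1))
  have hg_diff : DifferentiableOn ℂ g (ball 0 1) :=
    (differentiableOn_diskMobius hb1).comp
      (hd.comp (differentiableOn_diskMobius hz1) (mapsTo_diskMobius hz1))
      (hf.comp (mapsTo_diskMobius hz1))
  have hg0 : g 0 = 0 := by simp [g]
  have hg' : ‖deriv g 0‖ ≤ 1 :=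
    norm_deriv_le_one_of_mapsTo_ball hg_diff
      (by rw [hg0]; exact hg_maps.mono_right ball_subset_closedBall) one_pos
  have hMz : HasDerivAt (diskMobius z) (normSq z - 1) 0 := by
    simpa using hasDerivAt_diskMobius (a := z) (w := 0) (by simp)
  have hMb : HasDerivAt (diskMobius (f z)) ((normSq (f z) - 1) / (1 - normSq (f z)) ^ 2) (f z) := by
    simpa [normSq_eq_conj_mul_self] using
      hasDerivAt_diskMobius (one_sub_conj_mul_ne_zero hb1 hb1)
  have hf' : HasDerivAt f (deriv f z) (diskMobius z 0) := by
    rw [diskMobius_zero]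
    exact (hd.differentiableAt (isOpen_ball.mem_nhds hz)).hasDerivAt
  have hchain := hMb.comp_of_eq (0 : ℂ) (hf'.comp (0 : ℂ) hMz) (by simp)
  have hb2 : 0 < 1 - ‖f z‖ ^ 2 := by nlinarith [norm_nonneg (f z)]
  have hz2 : 0 < 1 - ‖z‖ ^ 2 := by nlinarith [norm_nonneg z]
  have hgz : (normSq (f z) - 1) / (1 - normSq (f z)) ^ 2 * (deriv f z * (normSq z - 1)) =
      (((1 - ‖z‖ ^ 2) / (1 - ‖f z‖ ^ 2) : ℝ) : ℂ) * deriv f z := by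
    have : (1 : ℂ) - (‖f z‖ : ℂ) ^ 2 ≠ 0 := by exact_mod_cast hb2.ne'
    simp only [normSq_eq_norm_sq]
    push_cast
    field_simp
    ring
  rw [hchain.deriv, hgz, norm_mul, norm_real, Real.norm_of_nonneg (by positivity),
    div_mul_eq_mul_div, div_le_one hb2] at hg'
  linarith

lemma norm_sub_one_lt_norm_add_one_sub_two_mul {α : ℝ} {u : ℂ} (hα : α < 1) (hu : α < u.re) :
    ‖u - 1‖ < ‖u + ((1 - 2 * α : ℝ) : ℂ)‖ := by
  refine lt_of_pow_lt_pow_left₀ 2 (norm_nonneg _) ?_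
  simp only [← normSq_eq_norm_sq, normSq_apply, sub_re, sub_im, add_re, add_im, one_re, one_im,
    ofReal_re, ofReal_im]
  nlinarith

/-- For `Re p > α`, `schwarzFunction (1 - 2α) p` is the Schwarz function `w` with
`p = (1 + (1 - 2α) w) / (1 - w)`. -/
noncomputable def schwarzFunction (γ : ℂ) (p : ℂ → ℂ) (z : ℂ) : ℂ := (p z - 1) / (p z + γ)

lemma deriv_div_eq_schwarzFunction {p : ℂ → ℂ} {γ z : ℂ} (hp : DifferentiableAt ℂ p z)
    (hpz : p z ≠ 0) (hpγ : p z + γ ≠ 0) (hγ : 1 + γ ≠ 0) :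
    deriv p z / p z = (1 + γ) * deriv (schwarzFunction γ p) z /
      ((1 - schwarzFunction γ p z) * (1 + γ * schwarzFunction γ p z)) := by
  have hw : HasDerivAt (schwarzFunction γ p)
      ((deriv p z * (p z + γ) - (p z - 1) * deriv p z) / (p z + γ) ^ 2) z :=
    (hp.hasDerivAt.sub_const 1).div (hp.hasDerivAt.add_const γ) hpγ
  have h1 : 1 - (p z - 1) / (p z + γ) = (1 + γ) / (p z + γ) := by field_simp; ring
  have h2 : 1 + γ * ((p z - 1) / (p z + γ)) = p z * (1 + γ) / (p z + γ) := by field_simp; ring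
  rw [hw.deriv, schwarzFunction, h1, h2]
  field_simp
  ring

lemma mapsTo_schwarzFunction {α : ℝ} (hα : α < 1) {p : ℂ → ℂ}
    (hre : ∀ z ∈ ball (0 : ℂ) 1, α < (p z).re) :
    MapsTo (schwarzFunction ((1 - 2 * α : ℝ) : ℂ) p) (ball 0 1) (ball 0 1) := by
  intro z hz
  have h := norm_sub_one_lt_norm_add_one_sub_two_mul hα (hre z hz)
  rw [mem_ball_zero_iff, schwarzFunction, norm_div, div_lt_one ((norm_nonneg _).trans_lt h)]
  exact h

lemma mul_le_norm_one_sub_mul_norm_one_add {γ : ℝ} (hγ : |γ| ≤ 1) {w : ℂ} (hw : ‖w‖ ≤ 1) :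
    (1 - ‖w‖) * (1 + γ * ‖w‖) ≤ ‖1 - w‖ * ‖1 + γ * w‖ := by
  obtain ⟨hγ₁, hγ₂⟩ := abs_le.mp hγ
  set ρ := ‖w‖
  have hρ0 : 0 ≤ ρ := norm_nonneg w
  have hρ : w.re ^ 2 + w.im ^ 2 = ρ ^ 2 := by rw [Complex.sq_norm, normSq_apply]; ring
  have ht : |w.re| ≤ ρ := abs_re_le_norm w
  obtain ⟨ht₁, ht₂⟩ := abs_le.mp ht
  have hsq₁ : ‖1 - w‖ ^ 2 = 1 - 2 * w.re + ρ ^ 2 := by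
    rw [Complex.sq_norm, normSq_apply]; simp only [sub_re, sub_im, one_re, one_im]; nlinarith
  have hsq₂ : ‖1 + γ * w‖ ^ 2 = 1 + 2 * γ * w.re + γ ^ 2 * ρ ^ 2 := by
    rw [Complex.sq_norm, normSq_apply]
    simp only [add_re, add_im, one_re, one_im, re_ofReal_mul, im_ofReal_mul]
    nlinarith
  have hγρ : 0 ≤ 1 - γ * ρ ^ 2 := by nlinarith
  -- `‖1 - w‖² ‖1 + γ w‖² - ((1 - ρ)(1 + γρ))² = (ρ - w.re) * hfactor`
  have hfactor : 0 ≤ 2 * (1 - γ) * (1 - γ * ρ ^ 2) + 4 * γ * (w.re + ρ) := by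
    rcases le_or_gt 0 γ with hγ0 | hγ0
    · nlinarith [mul_nonneg hγ0 (by linarith : 0 ≤ w.re + ρ),
        mul_nonneg (by linarith : 0 ≤ 1 - γ) hγρ]
    · nlinarith [sq_nonneg (1 + γ * ρ), mul_nonneg (by linarith : 0 ≤ -γ) (sq_nonneg (1 - ρ)),
        mul_nonneg (by linarith : 0 ≤ -γ) (by linarith : 0 ≤ ρ - w.re)]
  refine le_of_pow_le_pow_left₀ two_ne_zero (by positivity) ?_
  rw [mul_pow, mul_pow, hsq₁, hsq₂]
  nlinarith [mul_nonneg (by linarith : 0 ≤ ρ - w.re) hfactor]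

lemma div_le_one_div_of_mul_one_sub_sq_le {γ r ρ d : ℝ} (hγ : |γ| ≤ 1) (hρ : 0 ≤ ρ)
    (hρr : ρ ≤ r) (hr : r < 1) (hd : d * (1 - r ^ 2) ≤ 1 - ρ ^ 2) :
    d / ((1 - ρ) * (1 + γ * ρ)) ≤ 1 / ((1 - r) * (1 + γ * r)) := by
  obtain ⟨hγ₁, hγ₂⟩ := abs_le.mp hγ
  have hρ1 : 0 < 1 + γ * ρ := by nlinarith
  have hr1 : 0 < 1 + γ * r := by nlinarith
  have hmono : (1 + ρ) * (1 + γ * r) ≤ (1 + r) * (1 + γ * ρ) := by nlinarith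
  rw [div_le_div_iff₀ (by nlinarith) (by nlinarith)]
  nlinarith [mul_le_mul_of_nonneg_right hd hr1.le,
    mul_le_mul_of_nonneg_left hmono (by linarith : 0 ≤ 1 - ρ)]

theorem norm_mul_deriv_div_le_of_mapsTo_ball {w : ℂ → ℂ} (hd : DifferentiableOn ℂ w (ball 0 1))
    (hw : MapsTo w (ball 0 1) (ball 0 1)) (hw0 : w 0 = 0) {γ : ℝ} (hγ : |γ| ≤ 1) {z : ℂ}
    (hz : z ∈ ball 0 1) :
    ‖z * deriv w z / ((1 - w z) * (1 + γ * w z))‖ ≤ ‖z‖ / ((1 - ‖z‖) * (1 + γ * ‖z‖)) := by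
  have hz1 : ‖z‖ < 1 := mem_ball_zero_iff.mp hz
  have hwz : ‖w z‖ ≤ ‖z‖ :=
    norm_le_norm_of_mapsTo_ball hd (hw.mono_right ball_subset_closedBall) hw0 hz1
  have hpick := norm_deriv_mul_one_sub_sq_le_of_mapsTo_ball hd hw hz
  have hden := mul_le_norm_one_sub_mul_norm_one_add hγ (hwz.trans hz1.le)
  have hden_pos : 0 < (1 - ‖w z‖) * (1 + γ * ‖w z‖) := by
    obtain ⟨hγ₁, -⟩ := abs_le.mp hγ
    have := norm_nonneg (w z)
    exact mul_pos (by linarith) (by nlinarith)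
  calc ‖z * deriv w z / ((1 - w z) * (1 + γ * w z))‖
      = ‖z‖ * ‖deriv w z‖ / (‖1 - w z‖ * ‖1 + γ * w z‖) := by
        rw [norm_div, norm_mul, norm_mul]
    _ ≤ ‖z‖ * (‖deriv w z‖ / ((1 - ‖w z‖) * (1 + γ * ‖w z‖))) := by
        rw [← mul_div_assoc]
        exact div_le_div_of_nonneg_left (by positivity) hden_pos hden
    _ ≤ ‖z‖ * (1 / ((1 - ‖z‖) * (1 + γ * ‖z‖))) := mul_le_mul_of_nonneg_left
        (div_le_one_div_of_mul_one_sub_sq_le hγ (norm_nonneg _) hwz hz1 hpick) (norm_nonneg z)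
    _ = ‖z‖ / ((1 - ‖z‖) * (1 + γ * ‖z‖)) := mul_one_div _ _

theorem positive_real_part_log_deriv_bound (α : ℝ) (hα0 : 0 ≤ α) (hα1 : α < 1)
    (p : ℂ → ℂ) (hp : DifferentiableOn ℂ p (ball (0 : ℂ) 1))
    (hp0 : p 0 = 1) (hre : ∀ z ∈ ball (0 : ℂ) 1, α < (p z).re)
    (z : ℂ) (r : ℝ) (hz : ‖z‖ = r) (hr : r < 1) :
    ‖z * deriv p z / p z‖ ≤
      2 * r * (1 - α) / ((1 - r) * (1 + (1 - 2 * α) * r)) := by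
  set γ : ℝ := 1 - 2 * α
  set w := schwarzFunction γ p
  have hz' : z ∈ ball (0 : ℂ) 1 := by rwa [mem_ball_zero_iff, hz]
  have hpγ : ∀ x ∈ ball (0 : ℂ) 1, p x + γ ≠ 0 := fun x hx => norm_pos_iff.mp
    ((norm_nonneg _).trans_lt (norm_sub_one_lt_norm_add_one_sub_two_mul hα1 (hre x hx)))
  have hw_diff : DifferentiableOn ℂ w (ball 0 1) := (hp.sub_const 1).div (hp.add_const _) hpγ
  have hw0 : w 0 = 0 := by simp [w, schwarzFunction, hp0]
  have hpz : p z ≠ 0 := fun h => by simpa [h] using (hre z hz').trans_le' hα0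
  have h1γ : 1 + (γ : ℂ) = ((2 * (1 - α) : ℝ) : ℂ) := by push_cast [γ]; ring
  have hlog : z * deriv p z / p z =
      ((2 * (1 - α) : ℝ) : ℂ) * (z * deriv w z / ((1 - w z) * (1 + γ * w z))) := by
    rw [mul_div_assoc, deriv_div_eq_schwarzFunction (hp.differentiableAt (isOpen_ball.mem_nhds hz'))
      hpz (hpγ z hz') (by rw [h1γ]; exact_mod_cast (by linarith : 2 * (1 - α) ≠ 0)), h1γ]
    ring
  rw [hlog, norm_mul, norm_real, Real.norm_of_nonneg (by linarith), ← hz]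
  calc _ ≤ 2 * (1 - α) * (‖z‖ / ((1 - ‖z‖) * (1 + γ * ‖z‖))) :=
        mul_le_mul_of_nonneg_left (norm_mul_deriv_div_le_of_mapsTo_ball hw_diff (mapsTo_schwarzFunction hα1 hre)
          hw0 (abs_le.mpr ⟨by linarith, by linarith⟩) hz') (by linarith)
    _ = _ := by ring
end

section
/- Let R = (√2 − 1)/(2 + √(7 − 2√2)). Then R is the unique positive root of (√2−1)r² + 4r + (1−√2) = 0 in (0,1), and for all r ∈ [0, R], 4r/(1−r²) ≤ √2 − 1. -/
/-!
With `a = √2 - 1` one has `7 - 2√2 = 4 + a²`, so `R = a / (2 + √(4 + a²))` is the positive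
root `(√(4 + a²) - 2) / a` of `a r² + 4 r - a`, written with a rationalized numerator. On
`[0, ∞)` this quadratic is strictly increasing, which gives uniqueness of the root and, for
`0 ≤ r ≤ R`, `a r² + 4 r - a ≤ 0`, i.e. `4 r ≤ a (1 - r²)`.
-/

open Real Set

/-- The root in `[0, ∞)` of `a r² + 4 r - a`, i.e. the `r ∈ [0, 1)` with `4 r / (1 - r²) = a`
for `a ≥ 0`. -/
noncomputable def criticalRadius (a : ℝ) : ℝ := a / (2 + √(4 + a ^ 2))

variable {a : ℝ}

lemma two_add_sqrt_four_add_sq_pos (a : ℝ) : 0 < 2 + √(4 + a ^ 2) := by positivity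

lemma criticalRadius_pos (ha : 0 < a) : 0 < criticalRadius a :=
  div_pos ha (two_add_sqrt_four_add_sq_pos a)

lemma criticalRadius_nonneg (ha : 0 ≤ a) : 0 ≤ criticalRadius a :=
  div_nonneg ha (two_add_sqrt_four_add_sq_pos a).le

lemma criticalRadius_lt_one (a : ℝ) : criticalRadius a < 1 := by
  rw [criticalRadius, div_lt_one (two_add_sqrt_four_add_sq_pos a)]
  have : a < √(4 + a ^ 2) :=
    calc a ≤ |a| := le_abs_self a
      _ = √(a ^ 2) := (sqrt_sq_eq_abs a).symm
      _ < √(4 + a ^ 2) := sqrt_lt_sqrt (sq_nonneg a) (by linarith)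
  linarith

lemma criticalRadius_isRoot (a : ℝ) :
    a * criticalRadius a ^ 2 + 4 * criticalRadius a - a = 0 := by
  have hs : √(4 + a ^ 2) ^ 2 = 4 + a ^ 2 := sq_sqrt (by positivity)
  have hden := (two_add_sqrt_four_add_sq_pos a).ne'
  rw [criticalRadius]
  field_simp
  linear_combination -a * hs

lemma strictMonoOn_quadratic (ha : 0 ≤ a) :
    StrictMonoOn (fun r : ℝ => a * r ^ 2 + 4 * r - a) (Ici 0) := by
  intro x hx y _ hxy
  have : a * x ^ 2 ≤ a * y ^ 2 := by gcongr
  dsimp only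
  linarith

lemma eq_criticalRadius_of_isRoot {r : ℝ} (ha : 0 ≤ a) (hr : 0 ≤ r)
    (hroot : a * r ^ 2 + 4 * r - a = 0) : r = criticalRadius a :=
  (strictMonoOn_quadratic ha).injOn hr (criticalRadius_nonneg ha)
    (hroot.trans (criticalRadius_isRoot a).symm)

lemma four_mul_div_one_sub_sq_le {r : ℝ} (ha : 0 ≤ a) (hr : 0 ≤ r)
    (hrR : r ≤ criticalRadius a) : 4 * r / (1 - r ^ 2) ≤ a := by
  have hr1 : r < 1 := hrR.trans_lt (criticalRadius_lt_one a)
  have hquad : a * r ^ 2 + 4 * r - a ≤ 0 :=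
    calc a * r ^ 2 + 4 * r - a
        ≤ a * criticalRadius a ^ 2 + 4 * criticalRadius a - a :=
          (strictMonoOn_quadratic ha).monotoneOn hr (criticalRadius_nonneg ha) hrR
      _ = 0 := criticalRadius_isRoot a
  rw [div_le_iff₀ (by nlinarith)]
  linarith

lemma seven_sub_two_mul_sqrt_two : 7 - 2 * √2 = 4 + (√2 - 1) ^ 2 := by
  have : √2 ^ 2 = 2 := sq_sqrt zero_le_two
  linear_combination -this

theorem F1_SL_radius_computation :
    let R : ℝ := (Real.sqrt 2 - 1) / (2 + Real.sqrt (7 - 2 * Real.sqrt 2))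
    (0 < R ∧ R < 1) ∧
    (Real.sqrt 2 - 1) * R ^ 2 + 4 * R + (1 - Real.sqrt 2) = 0 ∧
    (∀ r ∈ Ioo (0 : ℝ) 1,
      (Real.sqrt 2 - 1) * r ^ 2 + 4 * r + (1 - Real.sqrt 2) = 0 → r = R) ∧
    (∀ r ∈ Icc (0 : ℝ) R, 4 * r / (1 - r ^ 2) ≤ Real.sqrt 2 - 1) := by
  intro R
  have hR : R = criticalRadius (√2 - 1) := by
    simp only [R, criticalRadius, seven_sub_two_mul_sqrt_two]
  have ha : 0 < √2 - 1 := sub_pos.mpr one_lt_sqrt_two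
  have hquad (r : ℝ) :
      (√2 - 1) * r ^ 2 + 4 * r + (1 - √2) = (√2 - 1) * r ^ 2 + 4 * r - (√2 - 1) := by
    ring
  simp only [hR, hquad]
  refine ⟨⟨criticalRadius_pos ha, criticalRadius_lt_one _⟩, criticalRadius_isRoot _,
    fun r hr hroot => eq_criticalRadius_of_isRoot ha.le hr.1.le hroot,
    fun r hr => four_mul_div_one_sub_sq_le ha.le hr.1 hr.2⟩
end

section
/- For 0 ≤ α < 1, let R = (1−α)/(2 + √(5 + α² − 2α)). Then R ∈ (0,1) and for all r ∈ [0, R], 1 − 4r/(1−r²) ≥ α, with equality at r = R. -/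
/-! With `β = 1 - α`, the equation `4r/(1 - r²) = β` is the quadratic `β r² + 4r - β = 0`, whose
root in `(0, 1)` is `(√(β² + 4) - 2)/β = β/(2 + √(β² + 4))`; this is `R`, since
`5 + α² - 2α = β² + 4`. As `r ↦ r/(1 - r²)` increases on `[0, 1)`, the inequality holds below `R`. -/

open Real Set

lemma div_one_sub_sq_le_div_one_sub_sq {r R : ℝ} (hr : 0 ≤ r) (hrR : r ≤ R) (hR : R < 1) :
    r / (1 - r ^ 2) ≤ R / (1 - R ^ 2) := by
  have hR0 : 0 ≤ R := hr.trans hrR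
  rw [div_le_div_iff₀ (by nlinarith) (by nlinarith)]
  nlinarith [mul_nonneg hr hR0]

noncomputable def quadraticRootRadius (β : ℝ) : ℝ := β / (2 + √(β ^ 2 + 4))

lemma two_add_sqrt_sq_add_four_pos (β : ℝ) : 0 < 2 + √(β ^ 2 + 4) := by positivity

lemma quadraticRootRadius_pos {β : ℝ} (hβ : 0 < β) : 0 < quadraticRootRadius β :=
  div_pos hβ (two_add_sqrt_sq_add_four_pos β)

lemma quadraticRootRadius_lt_one (β : ℝ) : quadraticRootRadius β < 1 := by
  have hβs : β < √(β ^ 2 + 4) := lt_sqrt_of_sq_lt (by linarith)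
  rw [quadraticRootRadius, div_lt_one (two_add_sqrt_sq_add_four_pos β)]
  linarith

lemma one_sub_sq_quadraticRootRadius (β : ℝ) :
    1 - quadraticRootRadius β ^ 2 = 4 / (2 + √(β ^ 2 + 4)) := by
  have hs : √(β ^ 2 + 4) ^ 2 = β ^ 2 + 4 := sq_sqrt (by positivity)
  have hpos := two_add_sqrt_sq_add_four_pos β
  rw [quadraticRootRadius]
  field_simp
  nlinarith

lemma four_mul_quadraticRootRadius_div (β : ℝ) :
    4 * quadraticRootRadius β / (1 - quadraticRootRadius β ^ 2) = β := by
  have hpos := two_add_sqrt_sq_add_four_pos β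
  rw [one_sub_sq_quadraticRootRadius, quadraticRootRadius]
  field_simp

theorem F1_starlike_order_radius_computation_general (α : ℝ) (hα1 : α < 1) :
    let R : ℝ := (1 - α) / (2 + Real.sqrt (5 + α ^ 2 - 2 * α))
    (0 < R ∧ R < 1) ∧
    (∀ r ∈ Icc (0 : ℝ) R, 1 - 4 * r / (1 - r ^ 2) ≥ α) ∧
    1 - 4 * R / (1 - R ^ 2) = α := by
  intro R
  have hR : R = quadraticRootRadius (1 - α) := by
    simp only [R, quadraticRootRadius]
    ring_nf
  have hβ : 0 < 1 - α := by linarith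
  have hR1 : R < 1 := hR ▸ quadraticRootRadius_lt_one (1 - α)
  have hRα : 1 - 4 * R / (1 - R ^ 2) = α := by
    rw [hR, four_mul_quadraticRootRadius_div]
    ring
  refine ⟨⟨hR ▸ quadraticRootRadius_pos hβ, hR1⟩, fun r ⟨hr0, hrR⟩ => ?_, hRα⟩
  have hmono := div_one_sub_sq_le_div_one_sub_sq hr0 hrR hR1
  rw [mul_div_assoc] at hRα ⊢
  linarith

theorem F1_starlike_order_radius_computation (α : ℝ) (hα0 : 0 ≤ α) (hα1 : α < 1) :
    let R : ℝ := (1 - α) / (2 + Real.sqrt (5 + α ^ 2 - 2 * α))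
    (0 < R ∧ R < 1) ∧
    (∀ r ∈ Icc (0 : ℝ) R, 1 - 4 * r / (1 - r ^ 2) ≥ α) ∧
    1 - 4 * R / (1 - R ^ 2) = α :=
  F1_starlike_order_radius_computation_general α hα1
end

section
/- Let f, g be analytic on the unit disk with f(0)=g(0)=0, f'(0)=g'(0)=1, Re(f(z)/g(z)) > 0 and Re(g(z)/z) > 1/2 on the unit disk (quotients extended analytically with value 1 at 0). Then for |z| = r < 1, |z f'(z)/f(z) − 1| ≤ (3r + r²)/(1−r²). -/
open Metric

open Set Complex ComplexConjugate Topology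

/-!
Write `f = z · p · q` with `q = g / z ∈ 𝒫(1/2)` and `p = f / g ∈ 𝒫(0)`, so that
`z f'/f - 1 = z p'/p + z q'/q`. For `q ∈ 𝒫(α)`, `0 ≤ α ≤ 1/2`, Schwarz–Pick applied to the Cayley
transform of `q` gives `|q'(z)| (1 - r²) ≤ 2 (Re q(z) - α)`, and the Schwarz lemma applied to
`(q - 1)/(q + 1 - 2α)` gives `|q(z)| (1 - r) ≤ 1 + (1 - 2α) r`; together they bound `|z q'/q|` by
`2 (1 - α) r / ((1 - r)(1 + (1 - 2α) r))`. For `α = 0` and `α = 1/2` the two bounds add up to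
`(3r + r²)/(1 - r²)`.
-/

lemma norm_sub_lt_norm_add_conj {u v : ℂ} (hu : 0 < u.re) (hv : 0 < v.re) :
    ‖u - v‖ < ‖u + conj v‖ := by
  rw [← sq_lt_sq₀ (norm_nonneg _) (norm_nonneg _), Complex.sq_norm, Complex.sq_norm]
  simp only [normSq_apply, sub_re, sub_im, add_re, add_im, conj_re, conj_im]
  nlinarith [mul_pos hu hv]

lemma norm_add_lt_norm_one_add_conj_mul {a w : ℂ} (ha : ‖a‖ < 1) (hw : ‖w‖ < 1) :
    ‖w + a‖ < ‖1 + conj a * w‖ := by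
  have key : ‖1 + conj a * w‖ ^ 2 - ‖w + a‖ ^ 2 = (1 - ‖a‖ ^ 2) * (1 - ‖w‖ ^ 2) := by
    simp only [Complex.sq_norm, normSq_apply, add_re, add_im, mul_re, mul_im, conj_re, conj_im,
      one_re, one_im]
    ring
  have : 0 < (1 - ‖a‖ ^ 2) * (1 - ‖w‖ ^ 2) := by
    apply mul_pos <;> nlinarith [norm_nonneg a, norm_nonneg w]
  exact (sq_lt_sq₀ (norm_nonneg _) (norm_nonneg _)).1 (by linarith)

/-- The automorphism of the unit disk sending `0` to `a`. -/
noncomputable def diskShift (a w : ℂ) : ℂ := (w + a) / (1 + conj a * w)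

section diskShift

variable {a : ℂ}

lemma one_add_conj_mul_ne_zero (ha : ‖a‖ < 1) {w : ℂ} (hw : ‖w‖ < 1) : 1 + conj a * w ≠ 0 :=
  norm_pos_iff.1 ((norm_nonneg _).trans_lt (norm_add_lt_norm_one_add_conj_mul ha hw))

lemma mapsTo_diskShift (ha : ‖a‖ < 1) : MapsTo (diskShift a) (ball 0 1) (ball 0 1) := by
  intro w hw
  rw [mem_ball_zero_iff] at hw ⊢
  rw [diskShift, norm_div, div_lt_one (norm_pos_iff.2 (one_add_conj_mul_ne_zero ha hw))]
  exact norm_add_lt_norm_one_add_conj_mul ha hw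

lemma differentiableOn_diskShift (ha : ‖a‖ < 1) : DifferentiableOn ℂ (diskShift a) (ball 0 1) :=
  DifferentiableOn.div (by fun_prop) (by fun_prop) fun _ hw ↦
    one_add_conj_mul_ne_zero ha (mem_ball_zero_iff.1 hw)

@[simp] lemma diskShift_zero : diskShift a 0 = a := by simp [diskShift]

lemma hasDerivAt_diskShift_zero : HasDerivAt (diskShift a) (1 - a * conj a) 0 := by
  have := ((hasDerivAt_id (0 : ℂ)).add_const a).fun_div
    (((hasDerivAt_id (0 : ℂ)).const_mul (conj a)).const_add 1) (by simp)
  unfold diskShift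
  simpa using this

end diskShift

/-- The Schwarz–Pick lemma at a zero of `F`. -/
lemma norm_deriv_mul_le_one_of_mapsTo_ball {E : Type*} [NormedAddCommGroup E] [NormedSpace ℂ E]
    {F : ℂ → E} (hd : DifferentiableOn ℂ F (ball 0 1))
    (hF : MapsTo F (ball 0 1) (closedBall 0 1)) {z : ℂ} (hz : z ∈ ball 0 1) (hFz : F z = 0) :
    ‖deriv F z‖ * (1 - ‖z‖ ^ 2) ≤ 1 := by
  have hz' : ‖z‖ < 1 := mem_ball_zero_iff.1 hz
  have hcomp : HasDerivAt (F ∘ diskShift z) ((1 - z * conj z) • deriv F z) 0 := by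
    refine HasDerivAt.scomp _ ?_ hasDerivAt_diskShift_zero
    rw [diskShift_zero]
    exact (hd.differentiableAt (isOpen_ball.mem_nhds hz)).hasDerivAt
  have := norm_deriv_le_one_of_mapsTo_ball (hd.comp (differentiableOn_diskShift hz')
    (mapsTo_diskShift hz')) (by simpa [hFz] using hF.comp (mapsTo_diskShift hz')) one_pos
  rw [hcomp.deriv, norm_smul, mul_conj, ← ofReal_one, ← ofReal_sub, norm_real, ← Complex.sq_norm,
    Real.norm_of_nonneg (by nlinarith [norm_nonneg z])] at this
  linarith

lemma norm_deriv_mul_le_of_lt_re {h : ℂ → ℂ} {a : ℝ} (hd : DifferentiableOn ℂ h (ball 0 1))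
    (hre : ∀ w ∈ ball 0 1, a < (h w).re) {z : ℂ} (hz : z ∈ ball 0 1) :
    ‖deriv h z‖ * (1 - ‖z‖ ^ 2) ≤ 2 * ((h z).re - a) := by
  -- `(h - h z) / D` maps the disk into itself, vanishes at `z`, and has derivative `h' z / D z`
  -- there, with `D z = 2 (Re h z - a)`.
  set D : ℂ → ℂ := fun w ↦ h w - a + conj (h z - a)
  have hpos : ∀ w ∈ ball (0 : ℂ) 1, 0 < (h w - a).re := fun w hw ↦ by simpa using hre w hw
  have hlt : ∀ w ∈ ball (0 : ℂ) 1, ‖h w - h z‖ < ‖D w‖ := fun w hw ↦ by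
    simpa only [sub_sub_sub_cancel_right] using norm_sub_lt_norm_add_conj (hpos w hw) (hpos z hz)
  have hD : ∀ w ∈ ball (0 : ℂ) 1, D w ≠ 0 := fun w hw ↦
    norm_pos_iff.1 ((norm_nonneg _).trans_lt (hlt w hw))
  have hDz : D z = (2 * ((h z).re - a) : ℝ) := by
    simp only [D, add_conj, sub_re, ofReal_re]
  have hFz : HasDerivAt (fun w ↦ (h w - h z) / D w) (deriv h z / D z) z := by
    have hh := (hd.differentiableAt (isOpen_ball.mem_nhds hz)).hasDerivAt
    refine ((hh.sub_const (h z)).fun_div ((hh.sub_const _).add_const _) (hD z hz)).congr_deriv ?_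
    rw [sub_self, zero_mul, sub_zero, sq, mul_div_mul_right _ _ (hD z hz)]
  have := norm_deriv_mul_le_one_of_mapsTo_ball (F := fun w ↦ (h w - h z) / D w)
    (((hd.sub_const _).div ((hd.sub_const _).add_const _) hD))
    (fun w hw ↦ by
      rw [mem_closedBall_zero_iff, norm_div]
      exact div_le_one_of_le₀ (hlt w hw).le (norm_nonneg _))
    hz (by simp)
  rwa [hFz.deriv, norm_div, hDz, norm_real, Real.norm_of_nonneg (by linarith [hre z hz]),
    div_mul_eq_mul_div, div_le_one (by linarith [hre z hz])] at this

lemma norm_sub_one_lt_norm_add_of_lt_re {q : ℂ} {α : ℝ} (hα : α < 1) (hq : α < q.re) :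
    ‖q - 1‖ < ‖q + (1 - 2 * α : ℝ)‖ := by
  have := norm_sub_lt_norm_add_conj (u := q - α) (v := (1 - α : ℝ)) (by simpa using hq)
    (by simpa using hα)
  convert this using 2
  · push_cast; ring
  · rw [conj_ofReal]; push_cast; ring

lemma norm_mul_one_sub_le_of_lt_re {q : ℂ → ℂ} {α : ℝ} (hd : DifferentiableOn ℂ q (ball 0 1))
    (h0 : q 0 = 1) (hre : ∀ w ∈ ball 0 1, α < (q w).re) {z : ℂ} (hz : z ∈ ball 0 1) :
    ‖q z‖ * (1 - ‖z‖) ≤ 1 + |1 - 2 * α| * ‖z‖ := by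
  -- Schwarz lemma for `(q - 1) / (q + 1 - 2α)`, then the triangle inequality.
  have hα : α < 1 := by simpa [h0] using hre 0 (mem_ball_self one_pos)
  have hlt : ∀ w ∈ ball (0 : ℂ) 1, ‖q w - 1‖ < ‖q w + (1 - 2 * α : ℝ)‖ := fun w hw ↦
    norm_sub_one_lt_norm_add_of_lt_re hα (hre w hw)
  have hD : ∀ w ∈ ball (0 : ℂ) 1, q w + (1 - 2 * α : ℝ) ≠ 0 := fun w hw ↦
    norm_pos_iff.1 ((norm_nonneg _).trans_lt (hlt w hw))
  have hschwarz := Complex.norm_le_norm_of_mapsTo_ball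
    (f := fun w ↦ (q w - 1) / (q w + (1 - 2 * α : ℝ))) (hd.sub_const _ |>.div (hd.add_const _) hD)
    (fun w hw ↦ by
      rw [mem_closedBall_zero_iff, norm_div]
      exact div_le_one_of_le₀ (hlt w hw).le (norm_nonneg _))
    (by simp [h0]) (mem_ball_zero_iff.1 hz)
  rw [norm_div, div_le_iff₀ (norm_pos_iff.2 (hD z hz))] at hschwarz
  have htri : ‖q z + (1 - 2 * α : ℝ)‖ ≤ ‖q z‖ + |1 - 2 * α| := by
    simpa only [norm_real, Real.norm_eq_abs] using norm_add_le (q z) ((1 - 2 * α : ℝ) : ℂ)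
  have hq : ‖q z‖ ≤ 1 + ‖q z - 1‖ := by simpa using norm_le_norm_add_norm_sub' (q z) 1
  nlinarith [norm_nonneg z]

lemma dslope_zero_eq_div {f : ℂ → ℂ} (hf0 : f 0 = 0) {w : ℂ} (hw : w ≠ 0) :
    dslope f 0 w = f w / w := by
  rw [dslope_of_ne f hw, slope_def_field, hf0, sub_zero, sub_zero]

/-- The class `𝒫(α)` of normalized functions on the unit disk with real part greater than `α`. -/
structure CaratheodoryClass (α : ℝ) (p : ℂ → ℂ) : Prop where
  differentiableOn : DifferentiableOn ℂ p (ball 0 1)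
  map_zero : p 0 = 1
  lt_re : ∀ w ∈ ball 0 1, α < (p w).re

namespace CaratheodoryClass

variable {α : ℝ} {p f g : ℂ → ℂ}

lemma ne_zero (hp : CaratheodoryClass α p) (hα : 0 ≤ α) {w : ℂ} (hw : w ∈ ball 0 1) :
    p w ≠ 0 := fun h ↦ by simpa [h] using hα.trans_lt (hp.lt_re w hw)

theorem norm_mul_logDeriv_le (hp : CaratheodoryClass α p) (hα₀ : 0 ≤ α) (hα : α ≤ 1 / 2)
    {z : ℂ} (hz : z ∈ ball 0 1) :
    ‖z * logDeriv p z‖ ≤ 2 * (1 - α) * ‖z‖ / ((1 - ‖z‖) * (1 + (1 - 2 * α) * ‖z‖)) := by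
  have hderiv := norm_deriv_mul_le_of_lt_re hp.differentiableOn hp.lt_re hz
  have hgrowth := norm_mul_one_sub_le_of_lt_re hp.differentiableOn hp.map_zero hp.lt_re hz
  rw [abs_of_nonneg (by linarith)] at hgrowth
  have hre := re_le_norm (p z)
  have hpz : 0 < ‖p z‖ := norm_pos_iff.2 (hp.ne_zero hα₀ hz)
  set r := ‖z‖
  have hr : r < 1 := mem_ball_zero_iff.1 hz
  have hr₀ : 0 ≤ r := norm_nonneg z
  have hs : 0 ≤ 1 + (1 - 2 * α) * r := by nlinarith
  have hden : 0 < (1 - r) * (1 + (1 - 2 * α) * r) := mul_pos (by linarith) (by nlinarith)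
  have key : ‖deriv p z‖ * ((1 - r) * (1 + (1 - 2 * α) * r)) ≤ 2 * (1 - α) * ‖p z‖ := by
    refine le_of_mul_le_mul_left ?_ (by linarith : 0 < 1 + r)
    calc (1 + r) * (‖deriv p z‖ * ((1 - r) * (1 + (1 - 2 * α) * r)))
        = ‖deriv p z‖ * (1 - r ^ 2) * (1 + (1 - 2 * α) * r) := by ring
      _ ≤ 2 * (‖p z‖ - α) * (1 + (1 - 2 * α) * r) := mul_le_mul_of_nonneg_right (by linarith) hs
      _ ≤ (1 + r) * (2 * (1 - α) * ‖p z‖) := by nlinarith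
  rw [norm_mul, logDeriv_apply, norm_div, le_div_iff₀ hden, mul_assoc, div_mul_eq_mul_div,
    mul_comm (2 * (1 - α))]
  exact mul_le_mul_of_nonneg_left ((div_le_iff₀ hpz).2 key) hr₀

lemma of_forall_ne_zero (hd : DifferentiableOn ℂ p (ball 0 1)) (h0 : p 0 = 1) (hα : α < 1)
    (hre : ∀ w ∈ ball 0 1, w ≠ 0 → α < (p w).re) : CaratheodoryClass α p where
  differentiableOn := hd
  map_zero := h0
  lt_re w hw := by
    rcases eq_or_ne w 0 with rfl | hw0
    · simpa [h0] using hα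
    · exact hre w hw hw0

lemma dslope_zero (hd : DifferentiableOn ℂ f (ball 0 1)) (hf0 : f 0 = 0) (hf0' : deriv f 0 = 1)
    (hα : α < 1) (hre : ∀ w ∈ ball 0 1, w ≠ 0 → α < (f w / w).re) :
    CaratheodoryClass α (dslope f 0) :=
  .of_forall_ne_zero ((differentiableOn_dslope (ball_mem_nhds 0 one_pos)).2 hd) (by simp [hf0']) hα
    fun w hw hw0 ↦ by simpa [dslope_zero_eq_div hf0 hw0] using hre w hw hw0

lemma dslope_zero_div (hf : DifferentiableOn ℂ f (ball 0 1)) (hf0 : f 0 = 0)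
    (hf0' : deriv f 0 = 1) (hg0 : g 0 = 0) {β : ℝ} (hg : CaratheodoryClass β (dslope g 0))
    (hβ : 0 ≤ β) (hα : α < 1) (hre : ∀ w ∈ ball 0 1, w ≠ 0 → α < (f w / g w).re) :
    CaratheodoryClass α (fun w ↦ dslope f 0 w / dslope g 0 w) :=
  .of_forall_ne_zero
    (((differentiableOn_dslope (ball_mem_nhds 0 one_pos)).2 hf).div hg.differentiableOn
      fun _ hw ↦ hg.ne_zero hβ hw)
    (by simp only [hg.map_zero, dslope_same, hf0', div_one]) hα
    fun w hw hw0 ↦ by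
      simpa [dslope_zero_eq_div hf0 hw0, dslope_zero_eq_div hg0 hw0, div_div_div_cancel_right₀ hw0]
        using hre w hw hw0

end CaratheodoryClass

lemma mul_deriv_div_sub_one_eq_add {𝕜 : Type*} [NontriviallyNormedField 𝕜] {f p q : 𝕜 → 𝕜} {z : 𝕜}
    (hf0 : f 0 = 0) (hz : z ≠ 0) (hp : DifferentiableAt 𝕜 p z) (hq : DifferentiableAt 𝕜 q z)
    (hpz : p z ≠ 0) (hqz : q z ≠ 0) (heq : dslope f 0 =ᶠ[𝓝 z] fun w ↦ p w * q w) :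
    z * deriv f z / f z - 1 = z * logDeriv p z + z * logDeriv q z := by
  have hf : f =ᶠ[𝓝 z] fun w ↦ w * (p w * q w) :=
    heq.mono fun w (hw : dslope f 0 w = p w * q w) ↦ by
      simpa [hw] using (sub_smul_dslope_of_zero hf0 w).symm
  rw [mul_div_assoc, ← logDeriv_apply, (logDeriv_congr_nhds hf).eq_of_nhds,
    logDeriv_mul (f := fun w ↦ w) (g := fun w ↦ p w * q w) z hz (mul_ne_zero hpz hqz)
      differentiableAt_id (hp.mul hq),
    logDeriv_mul z hpz hqz hp hq, logDeriv_id']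
  field_simp
  ring

theorem F2_log_deriv_bound_general
    (f g : ℂ → ℂ)
    (hf : DifferentiableOn ℂ f (ball (0 : ℂ) 1))
    (hg : DifferentiableOn ℂ g (ball (0 : ℂ) 1))
    (hf0 : f 0 = 0) (hg0 : g 0 = 0)
    (hf0' : deriv f 0 = 1) (hg0' : deriv g 0 = 1)
    (hfg : ∀ z ∈ ball (0 : ℂ) 1, z ≠ 0 → 0 < (f z / g z).re)
    (hgz : ∀ z ∈ ball (0 : ℂ) 1, z ≠ 0 → 1 / 2 < (g z / z).re)
    (z : ℂ) (hzball : z ∈ ball (0 : ℂ) 1) (hz0 : z ≠ 0)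
    (r : ℝ) (hr : ‖z‖ = r) :
    ‖z * deriv f z / f z - 1‖ ≤ (3 * r + r ^ 2) / (1 - r ^ 2) := by
  have hq : CaratheodoryClass (1 / 2) (dslope g 0) := .dslope_zero hg hg0 hg0' (by norm_num) hgz
  have hp : CaratheodoryClass 0 (fun w ↦ dslope f 0 w / dslope g 0 w) :=
    .dslope_zero_div hf hf0 hf0' hg0 hq (by norm_num) one_pos hfg
  have hU : ball (0 : ℂ) 1 ∈ 𝓝 z := isOpen_ball.mem_nhds hzball
  have hq0 : ∀ w ∈ ball (0 : ℂ) 1, dslope g 0 w ≠ 0 := fun _ ↦ hq.ne_zero (by norm_num)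
  rw [mul_deriv_div_sub_one_eq_add hf0 hz0 (hp.differentiableOn.differentiableAt hU)
    (hq.differentiableOn.differentiableAt hU) (hp.ne_zero le_rfl hzball) (hq0 z hzball)
    (Filter.eventually_of_mem hU fun w hw ↦ (div_mul_cancel₀ _ (hq0 w hw)).symm)]
  have hr₁ : r < 1 := hr ▸ mem_ball_zero_iff.1 hzball
  have hr₀ : 0 ≤ r := hr ▸ norm_nonneg z
  have hbound := (norm_add_le _ _).trans <| add_le_add
    (hp.norm_mul_logDeriv_le le_rfl (by norm_num) hzball)
    (hq.norm_mul_logDeriv_le (by norm_num) le_rfl hzball)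
  rw [hr] at hbound
  refine hbound.trans_eq ?_
  have : 1 - r ≠ 0 := by linarith
  have : 1 + r ≠ 0 := by linarith
  rw [show 1 - r ^ 2 = (1 - r) * (1 + r) by ring]
  field_simp
  ring

theorem F2_log_deriv_bound
    (f g : ℂ → ℂ)
    (hf : DifferentiableOn ℂ f (ball (0 : ℂ) 1))
    (hg : DifferentiableOn ℂ g (ball (0 : ℂ) 1))
    (hf0 : f 0 = 0) (hg0 : g 0 = 0)
    (hf0' : deriv f 0 = 1) (hg0' : deriv g 0 = 1)
    (hfne : ∀ z ∈ ball (0 : ℂ) 1, z ≠ 0 → f z ≠ 0)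
    (hgne : ∀ z ∈ ball (0 : ℂ) 1, z ≠ 0 → g z ≠ 0)
    (hfg : ∀ z ∈ ball (0 : ℂ) 1, z ≠ 0 → 0 < (f z / g z).re)
    (hgz : ∀ z ∈ ball (0 : ℂ) 1, z ≠ 0 → 1 / 2 < (g z / z).re)
    (z : ℂ) (hzball : z ∈ ball (0 : ℂ) 1) (hz0 : z ≠ 0)
    (r : ℝ) (hr : ‖z‖ = r) :
    ‖z * deriv f z / f z - 1‖ ≤ (3 * r + r ^ 2) / (1 - r ^ 2) :=
  F2_log_deriv_bound_general f g hf hg hf0 hg0 hf0' hg0' hfg hgz z hzball hz0 r hr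
end

section
/- Let f₀(z) = z(1+z)/(1−z)² on the unit disk. Then z f₀'(z)/f₀(z) = (1 + 3z)/(1−z²), and at the real point ρ = (4 − 2√2)/(√2(√(17 − 4√2) + 3)) one has |(ρ f₀'(ρ)/f₀(ρ))² − 1| = 1. -/
open Metric Real

/-! A direct computation gives `z f₀'(z) / f₀(z) = (1 + 3z) / (1 - z²)`. The radius `ρ` is where
this real quotient reaches `√2`, the value at which `w² - 1` has modulus `1`. -/

section LogDerivative

variable {𝕜 : Type*} [NontriviallyNormedField 𝕜] {z : 𝕜}

theorem hasDerivAt_mul_one_add_div_one_sub_sq (hz₁ : z ≠ 1) :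
    HasDerivAt (fun w : 𝕜 => w * (1 + w) / (1 - w) ^ 2) ((1 + 3 * z) / (1 - z) ^ 3) z := by
  have hsub : (1 : 𝕜) - z ≠ 0 := sub_ne_zero.mpr hz₁.symm
  refine (((hasDerivAt_id' z).mul ((hasDerivAt_id' z).const_add 1)).div
    (((hasDerivAt_id' z).const_sub 1).pow 2) (pow_ne_zero 2 hsub)).congr_deriv ?_
  simp only [Pi.mul_apply, Pi.pow_apply]
  field_simp
  ring

theorem mul_deriv_div_mul_one_add_div_one_sub_sq (hz₀ : z ≠ 0) (hz₁ : z ≠ 1) (hz₂ : z ≠ -1) :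
    z * deriv (fun w : 𝕜 => w * (1 + w) / (1 - w) ^ 2) z / (z * (1 + z) / (1 - z) ^ 2) =
      (1 + 3 * z) / (1 - z ^ 2) := by
  have hsub : (1 : 𝕜) - z ≠ 0 := sub_ne_zero.mpr hz₁.symm
  have hadd : (1 : 𝕜) + z ≠ 0 := fun h => hz₂ (eq_neg_of_add_eq_zero_right h)
  have hsq : (1 : 𝕜) - z ^ 2 ≠ 0 := by
    rw [show (1 : 𝕜) - z ^ 2 = (1 - z) * (1 + z) by ring]
    exact mul_ne_zero hsub hadd
  rw [(hasDerivAt_mul_one_add_div_one_sub_sq hz₁).deriv]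
  field_simp
  ring

end LogDerivative

/-- The positive root `(√(17 - 4√2) - 3) / (2√2)` of `√2 ρ² + 3ρ + 1 - √2 = 0`, rationalised. -/
noncomputable def extremalRadius : ℝ :=
  (4 - 2 * √2) / (√2 * (√(17 - 4 * √2) + 3))

theorem one_add_three_mul_extremalRadius :
    1 + 3 * extremalRadius = √2 * (1 - extremalRadius ^ 2) := by
  have hs : √2 ^ 2 = 2 := sq_sqrt zero_le_two
  have ht : √(17 - 4 * √2) ^ 2 = 17 - 4 * √2 :=
    sq_sqrt (by linarith [sqrt_two_lt_three_halves])
  unfold extremalRadius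
  field_simp
  linear_combination (4 * √2 - 6 * √(17 - 4 * √2) - 26) * hs + (√2 - √2 ^ 2) * ht

theorem extremalRadius_pos : 0 < extremalRadius :=
  div_pos (by linarith [sqrt_two_lt_three_halves]) (by positivity)

theorem one_sub_extremalRadius_sq_pos : 0 < 1 - extremalRadius ^ 2 := by
  refine pos_of_mul_pos_right ?_ (sqrt_nonneg 2)
  rw [← one_add_three_mul_extremalRadius]
  linarith [extremalRadius_pos]

theorem extremalRadius_lt_one : extremalRadius < 1 := by
  nlinarith [one_sub_extremalRadius_sq_pos, extremalRadius_pos]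

theorem one_add_three_mul_extremalRadius_div :
    (1 + 3 * extremalRadius) / (1 - extremalRadius ^ 2) = √2 := by
  rw [one_add_three_mul_extremalRadius, mul_div_cancel_right₀ _ one_sub_extremalRadius_sq_pos.ne']

theorem F2_SL_extremal
    (f₀ : ℂ → ℂ) (hf₀ : ∀ z : ℂ, f₀ z = z * (1 + z) / (1 - z) ^ 2) :
    (∀ z ∈ ball (0 : ℂ) 1, z ≠ 0 →
      z * deriv f₀ z / f₀ z = (1 + 3 * z) / (1 - z ^ 2)) ∧
    (let ρ : ℝ := (4 - 2 * Real.sqrt 2) / (Real.sqrt 2 * (Real.sqrt (17 - 4 * Real.sqrt 2) + 3))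
     ‖((ρ : ℂ) * deriv f₀ (ρ : ℂ) / f₀ (ρ : ℂ)) ^ 2 - 1‖ = 1) := by
  obtain rfl : f₀ = fun z => z * (1 + z) / (1 - z) ^ 2 := funext hf₀
  have hlog : ∀ z ∈ ball (0 : ℂ) 1, z ≠ 0 →
      z * deriv (fun w => w * (1 + w) / (1 - w) ^ 2) z / (z * (1 + z) / (1 - z) ^ 2) =
        (1 + 3 * z) / (1 - z ^ 2) := by
    intro z hz hz₀
    rw [mem_ball_zero_iff] at hz
    refine mul_deriv_div_mul_one_add_div_one_sub_sq hz₀ ?_ ?_ <;> rintro rfl <;> norm_num at hz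
  refine ⟨hlog, ?_⟩
  intro ρ
  rw [show ρ = extremalRadius from rfl]
  have hmem : (extremalRadius : ℂ) ∈ ball (0 : ℂ) 1 := by
    rw [mem_ball_zero_iff, Complex.norm_real, norm_of_nonneg extremalRadius_pos.le]
    exact extremalRadius_lt_one
  rw [hlog _ hmem (by exact_mod_cast extremalRadius_pos.ne')]
  have hq : (1 + 3 * (extremalRadius : ℂ)) / (1 - (extremalRadius : ℂ) ^ 2) = (√2 : ℝ) := by
    exact_mod_cast one_add_three_mul_extremalRadius_div
  rw [hq, ← Complex.ofReal_pow, sq_sqrt zero_le_two]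
  norm_num
end

section
/- For 0 ≤ α < 1, let R = 2(1−α)/(3 + √(9 + 4(2−α)(1−α))). Then R ∈ (0,1) and for all r ∈ [0, R], (1 − 3r − 2r²)/(1−r²) ≥ α, with equality at r = R; equivalently (2−α)r² + 3r + α − 1 ≤ 0 on [0, R] with equality at R. -/
open Real Set

/-!
`R` is the positive root of `q(r) = (2 - α) r² + 3 r + α - 1`, written in rationalized form.
Since `q` is increasing on `[0, ∞)`, it is nonpositive on `[0, R]`, and `q(1) = 4` forces
`R < 1`. Finally `(1 - 3r - 2r²) - α (1 - r²) = -q(r)`, so both claims about the quotient reduce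
to claims about `q`.
-/

lemma quadratic_eq_zero_of_rationalized_root {a b c s : ℝ} (hs : s ^ 2 = b ^ 2 - 4 * a * c)
    (hbs : b + s ≠ 0) :
    a * (-2 * c / (b + s)) ^ 2 + b * (-2 * c / (b + s)) + c = 0 := by
  field_simp
  linear_combination c * hs

lemma quadratic_nonpos_of_mem_Icc {a b c R r : ℝ} (ha : 0 ≤ a) (hb : 0 ≤ b)
    (hR : a * R ^ 2 + b * R + c = 0) (hr : r ∈ Icc 0 R) :
    a * r ^ 2 + b * r + c ≤ 0 := by
  obtain ⟨hr0, hrR⟩ := hr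
  have : a * r ^ 2 + b * r ≤ a * R ^ 2 + b * R := by gcongr
  linarith

lemma le_div_one_sub_sq_iff {α r : ℝ} (hr : 0 < 1 - r ^ 2) :
    α ≤ (1 - 3 * r - 2 * r ^ 2) / (1 - r ^ 2) ↔ (2 - α) * r ^ 2 + 3 * r + α - 1 ≤ 0 := by
  rw [le_div_iff₀ hr]
  constructor <;> intro h <;> linarith

lemma div_one_sub_sq_eq_iff {α r : ℝ} (hr : 1 - r ^ 2 ≠ 0) :
    (1 - 3 * r - 2 * r ^ 2) / (1 - r ^ 2) = α ↔ (2 - α) * r ^ 2 + 3 * r + α - 1 = 0 := by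
  rw [div_eq_iff hr]
  constructor <;> intro h <;> linarith

theorem F3_starlike_order_radius_computation_general (α : ℝ) (hα1 : α < 1) :
    let R : ℝ := 2 * (1 - α) / (3 + Real.sqrt (9 + 4 * (2 - α) * (1 - α)))
    (0 < R ∧ R < 1) ∧
    (∀ r ∈ Icc (0 : ℝ) R,
      (1 - 3 * r - 2 * r ^ 2) / (1 - r ^ 2) ≥ α ∧
      (2 - α) * r ^ 2 + 3 * r + α - 1 ≤ 0) ∧
    (1 - 3 * R - 2 * R ^ 2) / (1 - R ^ 2) = α ∧
    (2 - α) * R ^ 2 + 3 * R + α - 1 = 0 := by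
  intro R
  set s := √(9 + 4 * (2 - α) * (1 - α))
  have hs2 : s ^ 2 = 3 ^ 2 - 4 * (2 - α) * (α - 1) := by
    rw [sq_sqrt (by nlinarith)]; ring
  have hs : 0 ≤ s := sqrt_nonneg _
  have hR : R = -2 * (α - 1) / (3 + s) := by ring
  have hroot : (2 - α) * R ^ 2 + 3 * R + α - 1 = 0 := by
    rw [hR, add_sub_assoc]
    exact quadratic_eq_zero_of_rationalized_root hs2 (by positivity)
  have hnonpos (r : ℝ) (hr : r ∈ Icc 0 R) : (2 - α) * r ^ 2 + 3 * r + α - 1 ≤ 0 := by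
    rw [add_sub_assoc] at hroot ⊢
    exact quadratic_nonpos_of_mem_Icc (by linarith) (by norm_num) hroot hr
  have hR0 : 0 < R := div_pos (by linarith) (by positivity)
  have hR1 : R < 1 := by
    by_contra! h
    linarith [hnonpos 1 ⟨zero_le_one, h⟩]
  refine ⟨⟨hR0, hR1⟩, fun r hr => ⟨?_, hnonpos r hr⟩, ?_, hroot⟩
  · exact (le_div_one_sub_sq_iff (by nlinarith [hr.1, hr.2])).2 (hnonpos r hr)
  · exact (div_one_sub_sq_eq_iff (by nlinarith)).2 hroot

theorem F3_starlike_order_radius_computation (α : ℝ) (hα0 : 0 ≤ α) (hα1 : α < 1) :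
    let R : ℝ := 2 * (1 - α) / (3 + Real.sqrt (9 + 4 * (2 - α) * (1 - α)))
    (0 < R ∧ R < 1) ∧
    (∀ r ∈ Icc (0 : ℝ) R,
      (1 - 3 * r - 2 * r ^ 2) / (1 - r ^ 2) ≥ α ∧
      (2 - α) * r ^ 2 + 3 * r + α - 1 ≤ 0) ∧
    (1 - 3 * R - 2 * R ^ 2) / (1 - R ^ 2) = α ∧
    (2 - α) * R ^ 2 + 3 * R + α - 1 = 0 :=
  F3_starlike_order_radius_computation_general α hα1
end

section
/- Let f₀(z) = z(1+z)²/(1−z) and g₀(z) = z(1+z)/(1−z) on the unit disk. Then |f₀(z)/g₀(z) − 1| = |z| < 1 on 𝔻, Re(g₀(z)/z) > 0 on 𝔻, z f₀'(z)/f₀(z) = (1 + 3z − 2z²)/(1−z²), and at z = −r with r = (2√3 − 3)/3, one has |z f₀'(z)/f₀(z) − 1| = Re(z f₀'(z)/f₀(z)). -/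
/-! At `z = -r` the logarithmic derivative `z f₀'/f₀ = (1 + 3z - 2z²)/(1 - z²)` takes the value
`1/2`, the vertex of the parabola `|w - 1| = Re w`; this happens exactly when `3z² - 6z = 1`,
whose root in the unit disk is `z = 1 - 2√3/3 = -r`. The other claims are direct computations:
`f₀/g₀ = 1 + z`, and `g₀(z)/z = (1 + z)/(1 - z)` has real part `(1 - |z|²)/|1 - z|²`. -/

open Metric Real

lemma one_sub_ne_zero_of_norm_lt_one {R : Type*} [SeminormedRing R] [NormOneClass R] {x : R}
    (hx : ‖x‖ < 1) : 1 - x ≠ 0 := by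
  rw [sub_ne_zero]
  rintro rfl
  simp at hx

lemma one_add_ne_zero_of_norm_lt_one {R : Type*} [SeminormedRing R] [NormOneClass R] {x : R}
    (hx : ‖x‖ < 1) : 1 + x ≠ 0 := by
  simpa using one_sub_ne_zero_of_norm_lt_one (x := -x) (by rwa [norm_neg])

lemma one_sub_sq_ne_zero_of_norm_lt_one {R : Type*} [SeminormedRing R] [NormOneClass R] {x : R}
    (hx : ‖x‖ < 1) : 1 - x ^ 2 ≠ 0 :=
  one_sub_ne_zero_of_norm_lt_one <|
    (norm_pow_le' x two_pos).trans_lt (pow_lt_one₀ (norm_nonneg x) hx two_ne_zero)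

namespace Complex

lemma re_one_add_div_one_sub (z : ℂ) :
    ((1 + z) / (1 - z)).re = (1 - ‖z‖ ^ 2) / normSq (1 - z) := by
  rw [div_re, ← add_div, ← normSq_eq_norm_sq]
  congr 1
  simp only [normSq_apply, add_re, sub_re, add_im, sub_im, one_re, one_im]
  ring

lemma re_one_add_div_one_sub_pos {z : ℂ} (hz : ‖z‖ < 1) : 0 < ((1 + z) / (1 - z)).re := by
  rw [re_one_add_div_one_sub]
  have hz2 : ‖z‖ ^ 2 < 1 := pow_lt_one₀ (norm_nonneg z) hz two_ne_zero
  exact div_pos (by linarith) (normSq_pos.mpr (one_sub_ne_zero_of_norm_lt_one hz))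

end Complex

lemma hasDerivAt_mul_one_add_sq_div_one_sub {z : ℂ} (hz : 1 - z ≠ 0) :
    HasDerivAt (fun z : ℂ => z * (1 + z) ^ 2 / (1 - z))
      ((1 + z) * (1 + 3 * z - 2 * z ^ 2) / (1 - z) ^ 2) z := by
  have hnum : HasDerivAt (fun z : ℂ => z * (1 + z) ^ 2) _ z :=
    (hasDerivAt_id' z).mul (((hasDerivAt_id' z).const_add 1).pow 2)
  have hden : HasDerivAt (fun z : ℂ => 1 - z) _ z := (hasDerivAt_id' z).const_sub 1
  refine (hnum.div hden hz).congr_deriv ?_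
  push_cast
  ring

lemma mul_deriv_div_mul_one_add_sq_div_one_sub {z : ℂ} (hz : ‖z‖ < 1) (hz0 : z ≠ 0) :
    z * deriv (fun z : ℂ => z * (1 + z) ^ 2 / (1 - z)) z / (z * (1 + z) ^ 2 / (1 - z)) =
      (1 + 3 * z - 2 * z ^ 2) / (1 - z ^ 2) := by
  have h₁ := one_sub_ne_zero_of_norm_lt_one hz
  have h₂ := one_add_ne_zero_of_norm_lt_one hz
  have h₃ := one_sub_sq_ne_zero_of_norm_lt_one hz
  rw [(hasDerivAt_mul_one_add_sq_div_one_sub h₁).deriv]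
  field_simp
  ring

lemma one_add_three_mul_sub_two_mul_sq_div_one_sub_sq_eq_half {K : Type*} [Field K] [CharZero K]
    {z : K} (hz : 3 * z ^ 2 - 6 * z = 1) : (1 + 3 * z - 2 * z ^ 2) / (1 - z ^ 2) = 1 / 2 := by
  have hden : 1 - z ^ 2 ≠ 0 := by
    intro h
    have : (32 : K) = 0 := by linear_combination (30 - 18 * z) * h - (6 * z + 2) * hz
    norm_num at this
  field_simp
  linear_combination -hz

lemma two_mul_sqrt_three_sub_three_div_three_mem_Ioo :
    (2 * √3 - 3) / 3 ∈ Set.Ioo (0 : ℝ) 1 := by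
  have hs : √3 ^ 2 = 3 := sq_sqrt (by norm_num)
  have hs0 := sqrt_nonneg 3
  constructor <;> nlinarith

lemma three_mul_sq_add_six_mul_two_mul_sqrt_three_sub_three_div_three :
    3 * ((2 * √3 - 3) / 3) ^ 2 + 6 * ((2 * √3 - 3) / 3) = 1 := by
  have hs : √3 ^ 2 = 3 := sq_sqrt (by norm_num)
  linear_combination (4 / 3 : ℝ) * hs

theorem F3_parabolic_extremal
    (f₀ g₀ : ℂ → ℂ)
    (hf₀ : ∀ z : ℂ, f₀ z = z * (1 + z) ^ 2 / (1 - z))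
    (hg₀ : ∀ z : ℂ, g₀ z = z * (1 + z) / (1 - z)) :
    (∀ z ∈ ball (0 : ℂ) 1, z ≠ 0 →
      ‖f₀ z / g₀ z - 1‖ = ‖z‖ ∧ ‖z‖ < 1 ∧
      0 < (g₀ z / z).re) ∧
    (∀ z ∈ ball (0 : ℂ) 1, z ≠ 0 →
      z * deriv f₀ z / f₀ z = (1 + 3 * z - 2 * z ^ 2) / (1 - z ^ 2)) ∧
    (let r : ℝ := (2 * Real.sqrt 3 - 3) / 3
     let z : ℂ := -(r : ℂ)
     ‖z * deriv f₀ z / f₀ z - 1‖ = (z * deriv f₀ z / f₀ z).re) := by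
  obtain rfl : f₀ = fun z => z * (1 + z) ^ 2 / (1 - z) := funext hf₀
  obtain rfl : g₀ = fun z => z * (1 + z) / (1 - z) := funext hg₀
  have hlog : ∀ z ∈ ball (0 : ℂ) 1, z ≠ 0 →
      z * deriv (fun z => z * (1 + z) ^ 2 / (1 - z)) z / (z * (1 + z) ^ 2 / (1 - z)) =
        (1 + 3 * z - 2 * z ^ 2) / (1 - z ^ 2) := fun z hz hz0 =>
    mul_deriv_div_mul_one_add_sq_div_one_sub (mem_ball_zero_iff.mp hz) hz0
  refine ⟨fun z hz hz0 => ?_, hlog, ?_⟩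
  · have hz1 := mem_ball_zero_iff.mp hz
    have h₁ := one_sub_ne_zero_of_norm_lt_one hz1
    have h₂ := one_add_ne_zero_of_norm_lt_one hz1
    have hratio : z * (1 + z) ^ 2 / (1 - z) / (z * (1 + z) / (1 - z)) - 1 = z := by
      field_simp
      ring
    have hquot : z * (1 + z) / (1 - z) / z = (1 + z) / (1 - z) := by
      field_simp
    exact ⟨by rw [hratio], hz1, by rw [hquot]; exact Complex.re_one_add_div_one_sub_pos hz1⟩
  · intro r z
    obtain ⟨hr0, hr1⟩ := two_mul_sqrt_three_sub_three_div_three_mem_Ioo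
    have hz : z ∈ ball (0 : ℂ) 1 := by
      rwa [mem_ball_zero_iff, norm_neg, Complex.norm_real, norm_of_nonneg hr0.le]
    have hz0 : z ≠ 0 := neg_ne_zero.mpr (Complex.ofReal_ne_zero.mpr hr0.ne')
    have hquad : 3 * z ^ 2 - 6 * z = 1 := by
      have := congrArg (fun x : ℝ => (x : ℂ))
        three_mul_sq_add_six_mul_two_mul_sqrt_three_sub_three_div_three
      push_cast at this
      simp only [z, r]
      push_cast
      linear_combination this
    rw [hlog z hz hz0, one_add_three_mul_sub_two_mul_sq_div_one_sub_sq_eq_half hquad]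
    norm_num
end

section
/- Let R = (2√3 − 3)/3. Then R is the positive root of 3r² + 6r − 1 = 0, and for all r ∈ [0, R], r(3 + r)/(1−r²) ≤ 1/2. -/
open Real Set

theorem F3_parabolic_radius_computation :
    let R : ℝ := (2 * Real.sqrt 3 - 3) / 3
    0 < R ∧ 3 * R ^ 2 + 6 * R - 1 = 0 ∧
    ∀ r ∈ Icc (0 : ℝ) R, r * (3 + r) / (1 - r ^ 2) ≤ 1 / 2 := by
  intro R
  have hs : Real.sqrt 3 ^ 2 = 3 := Real.sq_sqrt (by norm_num)
  have hs1 : 1.7 < Real.sqrt 3 := by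
    nlinarith [Real.sqrt_nonneg 3, hs]
  have hs2 : Real.sqrt 3 < 1.8 := by
    nlinarith [Real.sqrt_nonneg 3, hs]
  refine ⟨by simp only [R]; nlinarith, by simp only [R]; ring_nf; nlinarith, ?_⟩
  intro r ⟨hr0, hrR⟩
  have hRlt : R < 1 := by simp only [R]; nlinarith
  have hr1 : r < 1 := lt_of_le_of_lt hrR hRlt
  have hpos : 0 < 1 - r ^ 2 := by nlinarith
  rw [div_le_iff₀ hpos]
  have hkey : 3 * r ^ 2 + 6 * r - 1 ≤ 0 := by
    have : 3 * R ^ 2 + 6 * R - 1 = 0 := by simp only [R]; ring_nf; nlinarith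
    nlinarith
  nlinarith
end

section
/- Let R = 1/(√5 + 2) = √5 − 2. Then R is the positive root of r² + 4r − 1 = 0, and for all r ∈ [0, R], (2r + r²)/(1−r²) ≤ 1/(1−r²) − 1/2. -/
/-! The disk inequality clears to `r ^ 2 + 4 * r - 1 ≤ 0`, i.e. `(r + 2) ^ 2 ≤ 5`, which for
`r ≥ -2` says exactly `r ≤ √5 - 2`; the identity `(√5 - 2)(√5 + 2) = 1` gives the other form of `R`. -/

open Real Set

lemma sqrt_five_sub_two_mul_add_two : (√5 - 2) * (√5 + 2) = 1 := by
  have h5 : √5 ^ 2 = 5 := sq_sqrt (by norm_num)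
  linear_combination h5

lemma two_lt_sqrt_five : (2 : ℝ) < √5 :=
  (lt_sqrt (by norm_num)).2 (by norm_num)

lemma sqrt_five_lt_three : √5 < 3 :=
  (sqrt_lt' (by norm_num)).2 (by norm_num)

lemma sq_add_four_mul_sub_one_nonpos {r : ℝ} (h₀ : -2 ≤ r) (h₁ : r ≤ √5 - 2) :
    r ^ 2 + 4 * r - 1 ≤ 0 := by
  have h : (r + 2) ^ 2 ≤ 5 := by
    calc (r + 2) ^ 2 ≤ √5 ^ 2 := pow_le_pow_left₀ (by linarith) (by linarith) 2
      _ = 5 := sq_sqrt (by norm_num)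
  linarith

lemma div_le_one_div_sub_half_iff {r : ℝ} (hr : r ^ 2 < 1) :
    (2 * r + r ^ 2) / (1 - r ^ 2) ≤ 1 / (1 - r ^ 2) - 1 / 2 ↔ r ^ 2 + 4 * r - 1 ≤ 0 := by
  have hd : 0 < 1 - r ^ 2 := by linarith
  rw [div_sub' hd.ne', div_le_div_iff_of_pos_right hd]
  constructor <;> intro h <;> linarith

theorem F5_parabolic_radius_computation :
    let R : ℝ := Real.sqrt 5 - 2
    R = 1 / (Real.sqrt 5 + 2) ∧ 0 < R ∧ R ^ 2 + 4 * R - 1 = 0 ∧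
    ∀ r ∈ Icc (0 : ℝ) R, (2 * r + r ^ 2) / (1 - r ^ 2) ≤ 1 / (1 - r ^ 2) - 1 / 2 := by
  intro R
  have hR : 0 < R := sub_pos.2 two_lt_sqrt_five
  refine ⟨eq_one_div_of_mul_eq_one_left sqrt_five_sub_two_mul_add_two, hR, ?_, ?_⟩
  · have h5 : √5 ^ 2 = 5 := sq_sqrt (by norm_num)
    linear_combination h5
  · rintro r ⟨hr₀, hrR⟩
    have hR1 : R < 1 := by linarith [sqrt_five_lt_three]
    have hr1 : r ^ 2 < 1 := by nlinarith
    exact (div_le_one_div_sub_half_iff hr1).2 (sq_add_four_mul_sub_one_nonpos (by linarith) hrR)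
end

section
/- Let f₀ be analytic on the unit disk with f₀(0) = 0 and f₀'(z) = (1+z)²/(1−z)³, and let g₀(z) = z/(1−z)². Then |f₀'(z)/g₀'(z) − 1| = |z| < 1 on 𝔻, 1 + z f₀''(z)/f₀'(z) = (1 + 5z)/(1−z²), and at z = −r with r = 5 − 2√6 one has |z f₀''(z)/f₀'(z)| = Re(1 + z f₀''(z)/f₀'(z)). -/
open Metric Real

/-!
Differentiating gives `f₀'/g₀' = 1 + z` and `1 + z f₀''/f₀' = (1 + 5z)/(1 - z²)`. For real
`z = -r` this value is `(1 - 5r)/(1 - r²)`, which equals `1/2` exactly when `r² - 10r + 1 = 0`,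
i.e. for `r = 5 - 2√6`; and `p = 1/2` is the real number with `|p - 1| = p`.
-/

section Derivatives

variable {𝕜 : Type*} [NontriviallyNormedField 𝕜]

lemma deriv_deriv_eq_of_forall_hasDerivAt {f F : 𝕜 → 𝕜} {U : Set 𝕜} (hU : IsOpen U)
    (hf : ∀ z ∈ U, HasDerivAt f (F z) z) {z : 𝕜} (hz : z ∈ U) :
    deriv (deriv f) z = deriv F z :=
  (Filter.eventuallyEq_of_mem (hU.mem_nhds hz) fun w hw => (hf w hw).deriv).deriv_eq

lemma hasDerivAt_div_one_sub_sq {z : 𝕜} (hz : 1 - z ≠ 0) :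
    HasDerivAt (fun w => w / (1 - w) ^ 2) ((1 + z) / (1 - z) ^ 3) z :=
  ((hasDerivAt_id' z).fun_div (((hasDerivAt_id' z).const_sub 1).fun_pow 2)
    (pow_ne_zero 2 hz)).congr_deriv (by field_simp; ring)

lemma hasDerivAt_one_add_sq_div_one_sub_cube {z : 𝕜} (hz : 1 - z ≠ 0) :
    HasDerivAt (fun w => (1 + w) ^ 2 / (1 - w) ^ 3) ((1 + z) * (5 + z) / (1 - z) ^ 4) z :=
  ((((hasDerivAt_id' z).const_add 1).fun_pow 2).fun_div
    (((hasDerivAt_id' z).const_sub 1).fun_pow 3) (pow_ne_zero 3 hz)).congr_deriv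
    (by field_simp; ring)

end Derivatives

lemma Complex.one_sub_ne_zero_of_norm_lt_one {z : ℂ} (hz : ‖z‖ < 1) : 1 - z ≠ 0 := by
  rw [sub_ne_zero]
  rintro rfl
  simp at hz

lemma Complex.one_add_ne_zero_of_norm_lt_one {z : ℂ} (hz : ‖z‖ < 1) : 1 + z ≠ 0 := by
  simpa using one_sub_ne_zero_of_norm_lt_one (z := -z) (by simpa using hz)

lemma Complex.one_sub_sq_ne_zero_of_norm_lt_one {z : ℂ} (hz : ‖z‖ < 1) : 1 - z ^ 2 ≠ 0 := by
  rw [show 1 - z ^ 2 = (1 - z) * (1 + z) by ring]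
  exact mul_ne_zero (one_sub_ne_zero_of_norm_lt_one hz) (one_add_ne_zero_of_norm_lt_one hz)

lemma five_sub_two_sqrt_six_mem_Ioo : 5 - 2 * √6 ∈ Set.Ioo (0 : ℝ) 1 := by
  have h := sq_sqrt (show (0 : ℝ) ≤ 6 by norm_num)
  constructor <;> nlinarith [sqrt_nonneg 6]

lemma five_sub_two_sqrt_six_sq : (5 - 2 * √6) ^ 2 = 10 * (5 - 2 * √6) - 1 := by
  have h := sq_sqrt (show (0 : ℝ) ≤ 6 by norm_num)
  linear_combination 4 * h

theorem F6_uniform_convexity_extremal_general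
    (f₀ g₀ : ℂ → ℂ)
    (hf₀' : ∀ z ∈ ball (0 : ℂ) 1, HasDerivAt f₀ ((1 + z) ^ 2 / (1 - z) ^ 3) z)
    (hg₀ : ∀ z : ℂ, g₀ z = z / (1 - z) ^ 2) :
    (∀ z ∈ ball (0 : ℂ) 1,
      ‖deriv f₀ z / deriv g₀ z - 1‖ = ‖z‖ ∧ ‖z‖ < 1) ∧
    (∀ z ∈ ball (0 : ℂ) 1,
      1 + z * deriv (deriv f₀) z / deriv f₀ z = (1 + 5 * z) / (1 - z ^ 2)) ∧
    (let r : ℝ := 5 - 2 * Real.sqrt 6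
     let z : ℂ := -(r : ℂ)
     ‖z * deriv (deriv f₀) z / deriv f₀ z‖ =
       (1 + z * deriv (deriv f₀) z / deriv f₀ z).re) := by
  have hf' (z) (hz : z ∈ ball (0 : ℂ) 1) : deriv f₀ z = (1 + z) ^ 2 / (1 - z) ^ 3 :=
    (hf₀' z hz).deriv
  have hf'' (z) (hz : z ∈ ball (0 : ℂ) 1) :
      deriv (deriv f₀) z = (1 + z) * (5 + z) / (1 - z) ^ 4 :=
    (deriv_deriv_eq_of_forall_hasDerivAt isOpen_ball hf₀' hz).trans
      (hasDerivAt_one_add_sq_div_one_sub_cube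
        (Complex.one_sub_ne_zero_of_norm_lt_one (mem_ball_zero_iff.1 hz))).deriv
  have hpre (z) (hz : z ∈ ball (0 : ℂ) 1) :
      1 + z * deriv (deriv f₀) z / deriv f₀ z = (1 + 5 * z) / (1 - z ^ 2) := by
    have hsub := Complex.one_sub_ne_zero_of_norm_lt_one (mem_ball_zero_iff.1 hz)
    have hadd := Complex.one_add_ne_zero_of_norm_lt_one (mem_ball_zero_iff.1 hz)
    have hsq := Complex.one_sub_sq_ne_zero_of_norm_lt_one (mem_ball_zero_iff.1 hz)
    rw [hf' z hz, hf'' z hz]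
    field_simp
    ring
  refine ⟨fun z hz => ⟨?_, mem_ball_zero_iff.1 hz⟩, hpre, ?_⟩
  · have hsub := Complex.one_sub_ne_zero_of_norm_lt_one (mem_ball_zero_iff.1 hz)
    have hadd := Complex.one_add_ne_zero_of_norm_lt_one (mem_ball_zero_iff.1 hz)
    rw [hf' z hz, show g₀ = _ from funext hg₀, (hasDerivAt_div_one_sub_sq hsub).deriv]
    congr 1
    field_simp
    ring
  · intro r z
    obtain ⟨hr0, hr1⟩ := five_sub_two_sqrt_six_mem_Ioo
    have hz : z ∈ ball (0 : ℂ) 1 := by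
      rw [mem_ball_zero_iff, norm_neg, Complex.norm_real, norm_of_nonneg hr0.le]
      exact hr1
    have hhalf : 1 + z * deriv (deriv f₀) z / deriv f₀ z = 1 / 2 := by
      rw [hpre z hz]
      have hr := congrArg ((↑) : ℝ → ℂ) five_sub_two_sqrt_six_sq
      rw [div_eq_iff (Complex.one_sub_sq_ne_zero_of_norm_lt_one (mem_ball_zero_iff.1 hz))]
      simp only [z, r]
      push_cast at hr ⊢
      linear_combination hr / 2
    rw [hhalf, eq_sub_of_add_eq' hhalf]
    norm_num

theorem F6_uniform_convexity_extremal
    (f₀ g₀ : ℂ → ℂ)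
    (hf₀0 : f₀ 0 = 0)
    (hf₀' : ∀ z ∈ ball (0 : ℂ) 1, HasDerivAt f₀ ((1 + z) ^ 2 / (1 - z) ^ 3) z)
    (hg₀ : ∀ z : ℂ, g₀ z = z / (1 - z) ^ 2) :
    (∀ z ∈ ball (0 : ℂ) 1,
      ‖deriv f₀ z / deriv g₀ z - 1‖ = ‖z‖ ∧ ‖z‖ < 1) ∧
    (∀ z ∈ ball (0 : ℂ) 1,
      1 + z * deriv (deriv f₀) z / deriv f₀ z = (1 + 5 * z) / (1 - z ^ 2)) ∧
    (let r : ℝ := 5 - 2 * Real.sqrt 6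
     let z : ℂ := -(r : ℂ)
     ‖z * deriv (deriv f₀) z / deriv f₀ z‖ =
       (1 + z * deriv (deriv f₀) z / deriv f₀ z).re) :=
  F6_uniform_convexity_extremal_general f₀ g₀ hf₀' hg₀
end
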